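/- arXiv:1907.08814 — 2 statements merged into one kernel-verified Lean document; each statement's English description precedes it below -/
import Mathlib

section
/- Let p ≥ 2 be real and c, d real numbers with c ≥ d. Using the signed power notation a^r := |a|^{r-1}a, one has c^{p-1} - d^{p-1} ≥ 2^{2-p} (c-d)^{p-1}. -/
/-!
On `[0, ∞)` the signed power is the ordinary power `a ^ q`, and it is odd. If `c` and `d` have
the same sign, superadditivity of `t ↦ t ^ q` on `[0, ∞)` already bounds the difference of
signed powers below by `(c - d) ^ q`. If `d ≤ 0 ≤ c`, that difference is `c ^ q + |d| ^ q`,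
and the power-mean inequality `(a + b) ^ q ≤ 2 ^ (q - 1) * (a ^ q + b ^ q)` yields the constant `2 ^ (1 - q)`.
-/

open Real

/-- Signed power: `a^r := |a|^(r-1) * a`. -/
noncomputable def spow (a r : ℝ) : ℝ := |a| ^ (r - 1) * a

lemma spow_neg (a r : ℝ) : spow (-a) r = -spow a r := by
  simp only [spow, abs_neg, mul_neg]

lemma spow_of_nonneg {a r : ℝ} (ha : 0 ≤ a) (hr : r ≠ 0) : spow a r = a ^ r := by
  rw [spow, abs_of_nonneg ha, ← rpow_add_one' ha (by simpa using hr), sub_add_cancel]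

lemma spow_of_nonpos {a r : ℝ} (ha : a ≤ 0) (hr : r ≠ 0) : spow a r = -(-a) ^ r := by
  rw [← spow_of_nonneg (neg_nonneg.2 ha) hr, spow_neg, neg_neg]

lemma rpow_sub_le_spow_sub_spow_of_nonneg {q c d : ℝ} (hq : 1 ≤ q) (hd : 0 ≤ d) (hcd : d ≤ c) :
    (c - d) ^ q ≤ spow c q - spow d q := by
  have hq0 : q ≠ 0 := by positivity
  have h := add_rpow_le_rpow_add (sub_nonneg.2 hcd) hd hq
  rw [sub_add_cancel] at h
  rw [spow_of_nonneg (hd.trans hcd) hq0, spow_of_nonneg hd hq0]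
  linarith

lemma two_rpow_one_sub_mul_rpow_sub_le_spow_sub_spow_of_nonpos_of_nonneg {q c d : ℝ}
    (hq : 1 ≤ q) (hd : d ≤ 0) (hc : 0 ≤ c) :
    2 ^ (1 - q) * (c - d) ^ q ≤ spow c q - spow d q := by
  have hq0 : q ≠ 0 := by positivity
  have hmean : (c + -d) ^ q ≤ 2 ^ (q - 1) * (c ^ q + (-d) ^ q) := by
    lift c to NNReal using hc
    lift -d to NNReal using neg_nonneg.2 hd with e
    exact_mod_cast NNReal.rpow_add_le_mul_rpow_add_rpow c e hq
  have hcancel : (2 : ℝ) ^ (1 - q) * 2 ^ (q - 1) = 1 := by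
    rw [← rpow_add two_pos, show 1 - q + (q - 1) = 0 by ring, rpow_zero]
  rw [spow_of_nonneg hc hq0, spow_of_nonpos hd hq0, sub_eq_add_neg c d]
  calc 2 ^ (1 - q) * (c + -d) ^ q ≤ 2 ^ (1 - q) * (2 ^ (q - 1) * (c ^ q + (-d) ^ q)) := by
        gcongr
    _ = c ^ q - -(-d) ^ q := by rw [← mul_assoc, hcancel]; ring

theorem two_rpow_one_sub_mul_rpow_sub_le_spow_sub_spow {q c d : ℝ} (hq : 1 ≤ q) (hcd : d ≤ c) :
    2 ^ (1 - q) * (c - d) ^ q ≤ spow c q - spow d q := by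
  have hconst : (2 : ℝ) ^ (1 - q) ≤ 1 := rpow_le_one_of_one_le_of_nonpos one_le_two (by linarith)
  have hpow : 0 ≤ (c - d) ^ q := rpow_nonneg (sub_nonneg.2 hcd) q
  have hweak : 2 ^ (1 - q) * (c - d) ^ q ≤ (c - d) ^ q := mul_le_of_le_one_left hpow hconst
  rcases le_total 0 d with hd | hd
  · exact hweak.trans (rpow_sub_le_spow_sub_spow_of_nonneg hq hd hcd)
  rcases le_total c 0 with hc | hc
  · have h := rpow_sub_le_spow_sub_spow_of_nonneg hq (neg_nonneg.2 hc) (neg_le_neg hcd)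
    rw [spow_neg, spow_neg, neg_sub_neg] at h
    linarith
  · exact two_rpow_one_sub_mul_rpow_sub_le_spow_sub_spow_of_nonpos_of_nonneg hq hd hc

theorem stmt0 (p c d : ℝ) (hp : 2 ≤ p) (hcd : d ≤ c) :
    2 ^ (2 - p) * (c - d) ^ (p - 1) ≤ spow c (p - 1) - spow d (p - 1) := by
  have h := two_rpow_one_sub_mul_rpow_sub_le_spow_sub_spow (q := p - 1) (by linarith) hcd
  rwa [show 1 - (p - 1) = 2 - p by ring] at h
end

section
/- Let q ≥ 1 and a ≥ b be real numbers. With signed powers a^r := |a|^{r-1}a, one has (a^{(q+1)/2} - b^{(q+1)/2})^2 ≤ ((q+1)^2 / (4q)) · (a^q - b^q) · (a - b). -/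
/-!
Since the signed power `t ↦ t^r` has derivative `r |t|^(r-1)`, the two differences are
`((q+1)/2) ∫_b^a |t|^((q-1)/2)` and `q ∫_b^a |t|^(q-1)`; the inequality is then the
Cauchy–Schwarz bound `(∫_b^a f)^2 ≤ (a - b) ∫_b^a f^2` for `f = |t|^((q-1)/2)`.
-/

open Real

open intervalIntegral

theorem hasDerivAt_spow (r : ℝ) {x : ℝ} (hx : x ≠ 0) :
    HasDerivAt (spow · r) (r * |x| ^ (r - 1)) x := by
  have hx' : |x| ≠ 0 := abs_ne_zero.2 hx
  have hpow : |x| ^ (r - 1 - 1) * |x| = |x| ^ (r - 1) := by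
    rw [← rpow_add_one hx']; ring_nf
  refine (((hasDerivAt_abs hx).rpow_const (p := r - 1) (Or.inl hx')).mul
    (hasDerivAt_id' x)).congr_deriv ?_
  linear_combination (r - 1) * |x| ^ (r - 1 - 1) * sign_mul_self x + (r - 1) * hpow

theorem continuous_abs_rpow {p : ℝ} (hp : 0 ≤ p) : Continuous (fun t : ℝ => |t| ^ p) :=
  continuous_abs.rpow_const fun _ => Or.inr hp

theorem continuous_spow {r : ℝ} (hr : 1 ≤ r) : Continuous (spow · r) :=
  (continuous_abs_rpow (sub_nonneg.2 hr)).mul continuous_id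

theorem spow_sub_spow_eq_integral {r : ℝ} (hr : 1 ≤ r) (a b : ℝ) :
    spow a r - spow b r = r * ∫ t in b..a, |t| ^ (r - 1) := by
  rw [← integral_const_mul, MeasureTheory.integral_eq_of_hasDerivAt_off_countable _ _
    (Set.countable_singleton 0) (continuous_spow hr).continuousOn
    (fun x hx => hasDerivAt_spow r hx.2)]
  exact (continuous_const.mul (continuous_abs_rpow (sub_nonneg.2 hr))).intervalIntegrable _ _

theorem sq_integral_le_integral_sq_mul {f : ℝ → ℝ} (hf : Continuous f) {a b : ℝ}
    (hab : b ≤ a) :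
    (∫ t in b..a, f t) ^ 2 ≤ (∫ t in b..a, f t ^ 2) * (a - b) := by
  have hquad (c : ℝ) :
      0 ≤ (a - b) * (c * c) + (-2 * ∫ t in b..a, f t) * c + ∫ t in b..a, f t ^ 2 := by
    have h : 0 ≤ ∫ t in b..a, (f t - c) ^ 2 := integral_nonneg hab fun t _ => sq_nonneg _
    simp only [sub_sq] at h
    rw [integral_add, integral_sub, integral_const, integral_mul_const, integral_const_mul] at h
    · simp only [smul_eq_mul] at h
      linarith
    all_goals exact Continuous.intervalIntegrable (by fun_prop) _ _
  have hdiscrim := discrim_le_zero hquad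
  rw [discrim] at hdiscrim
  linarith

theorem stmt1 (q a b : ℝ) (hq : 1 ≤ q) (hab : b ≤ a) :
    (spow a ((q + 1) / 2) - spow b ((q + 1) / 2)) ^ 2 ≤
      ((q + 1) ^ 2 / (4 * q)) * (spow a q - spow b q) * (a - b) := by
  have hsq : ∀ t : ℝ, (|t| ^ ((q + 1) / 2 - 1)) ^ 2 = |t| ^ (q - 1) := fun t => by
    rw [← rpow_natCast, ← rpow_mul (abs_nonneg t)]; ring_nf
  have hcs := sq_integral_le_integral_sq_mul
    (continuous_abs_rpow (p := (q + 1) / 2 - 1) (by linarith)) hab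
  simp only [hsq] at hcs
  rw [spow_sub_spow_eq_integral (by linarith) a b, spow_sub_spow_eq_integral hq a b]
  calc _ = ((q + 1) / 2) ^ 2 * (∫ t in b..a, |t| ^ ((q + 1) / 2 - 1)) ^ 2 := by ring
    _ ≤ ((q + 1) / 2) ^ 2 * ((∫ t in b..a, |t| ^ (q - 1)) * (a - b)) := by gcongr
    _ = _ := by field_simp; ring
end
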